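/- arXiv:2011.11457 — 5 statements merged into one kernel-verified Lean document; each statement's English description precedes it below -/
import Mathlib

section
/- For all natural numbers s and k, the alternating sum ∑_{l=0}^{s} (-1)^l * C(s,l) * C(2s+k-l, s+k-l) equals 1, where C(n,j) denotes the binomial coefficient. -/
/-!
Write `X ^ s = (-1 + (1 + X)) ^ s`, expand by the binomial theorem and multiply by `(1 + X) ^ m`.
Comparing coefficients of `X ^ (s + i)` gives
`∑ (-1)^l C(s,l) C(s+m-l, s+i) = C(m, i)`; the theorem is the case `m = s + k`, `i = 0`,
after the symmetry `C(n, j) = C(n, n - j)`.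
-/

open Polynomial Finset

theorem X_pow_mul_one_add_X_pow_eq_sum (R : Type*) [CommRing R] (s m : ℕ) :
    (X : R[X]) ^ s * (1 + X) ^ m =
      ∑ l ∈ range (s + 1), ((-1) ^ l * s.choose l : ℤ) • (1 + X) ^ (s + m - l) := by
  rw [show (X : R[X]) = -1 + (1 + X) by ring, add_pow, sum_mul]
  refine sum_congr rfl fun l hl => ?_
  rw [show s + m - l = s - l + m by have := mem_range_succ_iff.mp hl; omega, pow_add, zsmul_eq_mul]
  push_cast
  ring

theorem sum_neg_one_pow_mul_choose_mul_choose (s m i : ℕ) :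
    ∑ l ∈ range (s + 1), (-1 : ℤ) ^ l * s.choose l * (s + m - l).choose (s + i) = m.choose i := by
  have h := congrArg (coeff · (i + s)) (X_pow_mul_one_add_X_pow_eq_sum ℤ s m)
  simp only [mul_comm (X ^ s), coeff_mul_X_pow, coeff_one_add_X_pow, finsetSum_coeff, coeff_smul,
    smul_eq_mul] at h
  rw [h, add_comm i s]

/-- For all natural numbers `s` and `k`,
`∑_{l=0}^{s} (-1)^l * C(s,l) * C(2s+k-l, s+k-l) = 1`. -/
theorem alternating_binomial_sum_eq_one (s k : ℕ) :
    ∑ l ∈ Finset.range (s + 1),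
      (-1 : ℤ) ^ l * (Nat.choose s l : ℤ) *
        (Nat.choose (2 * s + k - l) (s + k - l) : ℤ) = 1 := by
  have h := sum_neg_one_pow_mul_choose_mul_choose s (s + k) 0
  rw [Nat.choose_zero_right, Nat.cast_one, add_zero] at h
  refine (sum_congr rfl fun l hl => ?_).trans h
  have hl : l ≤ s := mem_range_succ_iff.mp hl
  rw [show s + (s + k) - l = 2 * s + k - l by omega, ← Nat.choose_symm (by omega : s ≤ 2 * s + k - l),
    show 2 * s + k - l - s = s + k - l by omega]
end

section
/- For natural numbers s ≥ 1, k, and a real (or rational) parameter m with m/2 + 2s + k - l - 1 ≠ 0 for all 0 ≤ l ≤ s-1, one has ∑_{l=0}^{s-1} (-1)^l * (s/(m/2 + 2s + k - l - 1)) * C(s-1, l) * C(2s+k-l, s+k-l) = 1 - (m/2 - 1)_s / (m/2 + s + k)_s, where (a)_n is the Pochhammer symbol. -/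
/-!
Put `x = m / 2` and induct on `s`, replacing `k` by `k + 2`. Since
`(x-1)_{s+1} / (x+s+1+k)_{s+1} = (x+s-1)/(x+s+k+1) · (x-1)_s / (x+s+k+2)_s`, it suffices that the
sum obeys the same recursion. Termwise, the `l`-th term for `(s + 1, k)` is `(x+s-1)/(x+s+k+1)`
times the `l`-th term for `(s, k + 2)` plus `(k+2)/(x+s+k+1) · (-1)^l C(s,l) C(2s+k+2-l, s)`,
and these extra terms add up to `(k+2)/(x+s+k+1)`: the alternating sum
`∑_{l ≤ s} (-1)^l C(s,l) C(2s+c-l, s)` is the `s`-th forward difference of the degree-`s`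
polynomial `C(·, s)`, hence equals `1`.
-/

open Finset

theorem alternating_sum_choose_mul_choose (s c : ℕ) :
    ∑ l ∈ range (s + 1), (-1 : ℤ) ^ l * s.choose l * (2 * s + c - l).choose s = 1 := by
  have h := congr_fun (fwdDiff_iter_choose 0 s) (s + c)
  rw [fwdDiff_iter_eq_sum_shift, ← sum_range_reflect] at h
  simp only [add_zero, Nat.choose_zero_right, Nat.cast_one, smul_eq_mul, mul_one,
    Nat.add_sub_cancel] at h
  refine (sum_congr rfl fun l hl => ?_).trans h
  have hl : l ≤ s := Nat.lt_succ_iff.mp (mem_range.mp hl)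
  rw [Nat.sub_sub_self hl, Nat.choose_symm hl, show s + c + (s - l) = 2 * s + c - l by omega]

theorem Nat.mul_choose_sub_one (s l : ℕ) : s * (s - 1).choose l = (s - l) * s.choose l := by
  cases s with
  | zero => simp
  | succ n => rw [Nat.add_sub_cancel, mul_comm, Nat.choose_mul_succ_eq, mul_comm]

section

variable {K : Type*} [Field K] (x : K)

def pochhammerSumTerm (s k l : ℕ) : K :=
  (-1) ^ l * ((s : K) / (x + 2 * s + k - l - 1)) * ((s - 1).choose l : K) *
    ((2 * s + k - l).choose (s + k - l) : K)

theorem pochhammerSumTerm_self (s k : ℕ) : pochhammerSumTerm x s k s = 0 := by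
  rcases s with _ | s <;> simp [pochhammerSumTerm]

theorem pochhammerSumTerm_succ {s k l : ℕ} (hl : l ≤ s)
    (hd : x + 2 * (s + 1 : ℕ) + k - l - 1 ≠ 0) (hA : x + s + k + 1 ≠ 0) :
    pochhammerSumTerm x (s + 1) k l =
      (x + s - 1) / (x + s + k + 1) * pochhammerSumTerm x s (k + 2) l +
        (k + 2) / (x + s + k + 1) * ((-1) ^ l * s.choose l * (2 * s + k + 2 - l).choose s) := by
  have hsymm_succ :
      (2 * (s + 1) + k - l).choose (s + 1 + k - l) = (2 * s + k + 2 - l).choose (s + 1) := by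
    rw [show 2 * (s + 1) + k - l = 2 * s + k + 2 - l by omega]
    exact Nat.choose_symm_of_eq_add (by omega)
  have hsymm : (2 * s + (k + 2) - l).choose (s + (k + 2) - l) = (2 * s + k + 2 - l).choose s := by
    rw [show 2 * s + (k + 2) - l = 2 * s + k + 2 - l by omega]
    exact Nat.choose_symm_of_eq_add (by omega)
  have hlower : (s * (s - 1).choose l : K) = (s - l) * s.choose l := by
    have h := congrArg (Nat.cast (R := K)) (Nat.mul_choose_sub_one s l)
    push_cast [Nat.cast_sub hl] at h
    exact h
  have hupper : ((s + 1) * (2 * s + k + 2 - l).choose (s + 1) : K) =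
      (s + k + 2 - l) * (2 * s + k + 2 - l).choose s := by
    have h := congrArg (Nat.cast (R := K)) (Nat.choose_succ_right_eq (2 * s + k + 2 - l) s)
    rw [show 2 * s + k + 2 - l - s = s + k + 2 - l by omega] at h
    push_cast [Nat.cast_sub (show l ≤ s + k + 2 by omega)] at h
    linear_combination h
  simp only [pochhammerSumTerm, Nat.add_sub_cancel, hsymm_succ, hsymm]
  push_cast at hd ⊢
  set d := x + 2 * (s + 1 : K) + k - l - 1 with hd_def
  rw [show x + 2 * (s : K) + (k + 2) - l - 1 = d by ring]
  field_simp
  linear_combination (s.choose l : K) * (x + s + k + 1) * hupper -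
    ((2 * s + k + 2 - l).choose s : K) * (x + s - 1) * hlower -
    ((2 * s + k + 2 - l).choose s : K) * (s.choose l : K) * (k + 2) * hd_def

theorem prod_range_succ_eq_mul_prod_shift (s k : ℕ) :
    ∏ i ∈ range (s + 1), (x + (s + 1 : ℕ) + k + i) =
      (x + s + k + 1) * ∏ i ∈ range s, (x + s + (k + 2 : ℕ) + i) := by
  rw [prod_range_succ', mul_comm]
  push_cast
  congr 1
  · ring
  · exact prod_congr rfl fun i _ => by ring

theorem sum_pochhammerSumTerm (s k : ℕ) (hden : ∀ l < s, x + 2 * s + k - l - 1 ≠ 0) :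
    ∑ l ∈ range s, pochhammerSumTerm x s k l =
      1 - (∏ i ∈ range s, (x - 1 + i)) / ∏ i ∈ range s, (x + s + k + i) := by
  induction s generalizing k with
  | zero => simp
  | succ s ih =>
    have hA : x + s + k + 1 ≠ 0 := by
      convert hden s (Nat.lt_succ_self s) using 1
      push_cast
      ring
    have hden' : ∀ l < s, x + 2 * s + (k + 2 : ℕ) - l - 1 ≠ 0 := fun l hl => by
      convert hden l (Nat.lt_succ_of_lt hl) using 1
      push_cast
      ring
    have halt :
        ∑ l ∈ range (s + 1), ((-1) ^ l * s.choose l * (2 * s + k + 2 - l).choose s : K) = 1 := by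
      have h := congrArg (Int.cast (R := K)) (alternating_sum_choose_mul_choose s (k + 2))
      push_cast [← add_assoc] at h
      exact h
    calc ∑ l ∈ range (s + 1), pochhammerSumTerm x (s + 1) k l
        = ∑ l ∈ range (s + 1), ((x + s - 1) / (x + s + k + 1) * pochhammerSumTerm x s (k + 2) l +
            (k + 2) / (x + s + k + 1) * ((-1) ^ l * s.choose l * (2 * s + k + 2 - l).choose s)) :=
          sum_congr rfl fun l hl =>
            pochhammerSumTerm_succ x (Nat.lt_succ_iff.mp (mem_range.mp hl))
              (hden l (mem_range.mp hl)) hA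
      _ = (x + s - 1) / (x + s + k + 1) * ∑ l ∈ range s, pochhammerSumTerm x s (k + 2) l +
            (k + 2) / (x + s + k + 1) := by
          rw [sum_add_distrib, ← mul_sum, ← mul_sum, halt, sum_range_succ, pochhammerSumTerm_self,
            add_zero, mul_one]
      _ = 1 - (∏ i ∈ range (s + 1), (x - 1 + i)) /
            ∏ i ∈ range (s + 1), (x + (s + 1 : ℕ) + k + i) := by
          rw [ih (k + 2) hden', prod_range_succ, prod_range_succ_eq_mul_prod_shift]
          field_simp
          ring

end

theorem alternating_sum_pochhammer_general (s k : ℕ) (m : ℝ)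
    (hden : ∀ l < s, (m / 2 + 2 * s + k - l - 1 : ℝ) ≠ 0) :
    ∑ l ∈ Finset.range s,
      (-1 : ℝ) ^ l * ((s : ℝ) / (m / 2 + 2 * s + k - l - 1)) *
        (Nat.choose (s - 1) l : ℝ) * (Nat.choose (2 * s + k - l) (s + k - l) : ℝ) =
      1 - (∏ i ∈ Finset.range s, (m / 2 - 1 + i)) /
          (∏ i ∈ Finset.range s, (m / 2 + s + k + i)) :=
  sum_pochhammerSumTerm (m / 2) s k hden

/-- For natural numbers `s ≥ 1`, `k`, and a real parameter `m > 2` (so that no denominator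
vanishes), one has
`∑_{l=0}^{s-1} (-1)^l (s/(m/2+2s+k-l-1)) C(s-1,l) C(2s+k-l, s+k-l)
  = 1 - (m/2-1)_s/(m/2+s+k)_s`,
where `(a)_n` is the Pochhammer symbol (rising factorial). -/
theorem alternating_sum_pochhammer (s k : ℕ) (hs : 1 ≤ s) (m : ℝ) (hm : 2 < m)
    (hden : ∀ l < s, (m / 2 + 2 * s + k - l - 1 : ℝ) ≠ 0) :
    ∑ l ∈ Finset.range s,
      (-1 : ℝ) ^ l * ((s : ℝ) / (m / 2 + 2 * s + k - l - 1)) *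
        (Nat.choose (s - 1) l : ℝ) * (Nat.choose (2 * s + k - l) (s + k - l) : ℝ) =
      1 - (∏ i ∈ Finset.range s, (m / 2 - 1 + i)) /
          (∏ i ∈ Finset.range s, (m / 2 + s + k + i)) :=
  alternating_sum_pochhammer_general s k m hden
end

section
/- For natural numbers s, k, and real m > 2, the sum ∑_{j=0}^{s} (-1)^j * Γ(m/2 + 2s + k - j) / (j! * Γ(s-j+1) * Γ(s+k-j+1)) equals Γ(m/2 + s) * Γ(m/2 + s + k) / (s! * (s+k)! * Γ(m/2)). -/
/-!
With `a = m / 2`, every Gamma value in the identity is `Γ(a)` or `Γ(a + s + k)` times a rising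
factorial, or a factorial. Pulling out `Γ(a + s + k)`, the identity becomes the Chu–Vandermonde
identity `(x + y)_s = ∑ⱼ C(s, j) (x)_j (y)_{s-j}` for rising factorials at `x = -(s + k)`,
`y = a + s + k`, since `(-n)_j = (-1)^j n! / (n - j)!`.
-/

open Polynomial Finset
open scoped Nat

theorem descPochhammer_smeval_eq_eval {R : Type*} [CommRing R] (r : R) (n : ℕ) :
    (descPochhammer ℤ n).smeval r = (descPochhammer R n).eval r := by
  rw [← aeval_eq_smeval, aeval_def, eval₂_eq_eval_map, descPochhammer_map]

/-- Reduced to the falling-factorial Chu–Vandermonde identity through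
`(x)_n = (-1)^n (-x)^{(n)}`. -/
theorem ascPochhammer_eval_add {R : Type*} [CommRing R] (x y : R) (n : ℕ) :
    (ascPochhammer R n).eval (x + y) = ∑ ij ∈ antidiagonal n,
      n.choose ij.1 * ((ascPochhammer R ij.1).eval x * (ascPochhammer R ij.2).eval y) := by
  have vandermonde := Ring.descPochhammer_smeval_add (r := -x) (s := -y) n (Commute.all _ _)
  simp only [descPochhammer_smeval_eq_eval] at vandermonde
  rw [← neg_neg (x + y), ascPochhammer_eval_neg_eq_descPochhammer, neg_add, vandermonde, mul_sum]
  refine sum_congr rfl fun ij hij => ?_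
  rw [← mem_antidiagonal.mp hij, ← neg_neg x, ← neg_neg y,
    ascPochhammer_eval_neg_eq_descPochhammer, ascPochhammer_eval_neg_eq_descPochhammer, pow_add]
  simp only [neg_neg]
  ring

theorem ascPochhammer_eval_neg_natCast {R : Type*} [CommRing R] (n k : ℕ) :
    (ascPochhammer R k).eval (-(n : R)) = (-1) ^ k * n.descFactorial k := by
  rw [ascPochhammer_eval_neg_eq_descPochhammer, descPochhammer_eval_eq_descFactorial]

theorem sum_neg_one_pow_mul_ascPochhammer_div_factorial {K : Type*} [Field K] [CharZero K]
    (x : K) {s n : ℕ} (hsn : s ≤ n) :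
    ∑ j ∈ range (s + 1), (-1) ^ j * (ascPochhammer K (s - j)).eval x /
        ((j ! : K) * (s - j)! * (n - j)!) =
      (ascPochhammer K s).eval (x - n) / ((s ! : K) * n !) := by
  rw [sub_eq_neg_add, ascPochhammer_eval_add, Nat.sum_antidiagonal_eq_sum_range_succ
    (fun i j => (s.choose i : K) * ((ascPochhammer K i).eval (-(n : K)) *
      (ascPochhammer K j).eval x)), sum_div]
  refine sum_congr rfl fun j hj => ?_
  have hjs : j ≤ s := Nat.lt_succ_iff.mp (mem_range.mp hj)
  have hs : (s.choose j * j ! * (s - j)! : K) = s ! := by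
    exact_mod_cast Nat.choose_mul_factorial_mul_factorial hjs
  have hn : ((n - j)! * n.descFactorial j : K) = n ! := by
    exact_mod_cast Nat.factorial_mul_descFactorial (hjs.trans hsn)
  have hchoose : (s.choose j : K) ≠ 0 := by exact_mod_cast (Nat.choose_pos hjs).ne'
  have hdesc : (n.descFactorial j : K) ≠ 0 := by
    exact_mod_cast (Nat.descFactorial_pos.mpr (hjs.trans hsn)).ne'
  rw [ascPochhammer_eval_neg_natCast, ← hs, ← hn]
  field_simp

theorem Real.Gamma_add_nat {x : ℝ} (hx : ∀ k : ℕ, x ≠ -k) (n : ℕ) :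
    Real.Gamma (x + n) = Real.Gamma x * (ascPochhammer ℝ n).eval x := by
  induction n with
  | zero => simp
  | succ n ih =>
    have hxn : x + n ≠ 0 := fun h => hx n (eq_neg_of_add_eq_zero_left h)
    rw [Nat.cast_succ, ← add_assoc, Real.Gamma_add_one hxn, ih, ascPochhammer_succ_eval]
    ring

theorem Real.Gamma_natCast_sub_add_one {n j : ℕ} (h : j ≤ n) :
    Real.Gamma ((n : ℝ) - j + 1) = (n - j)! := by
  rw [← Nat.cast_sub h, Real.Gamma_nat_eq_factorial]

/-- For natural numbers `s`, `k` and real `m > 2`,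
`∑_{j=0}^{s} (-1)^j Γ(m/2+2s+k-j)/(j! Γ(s-j+1) Γ(s+k-j+1))
  = Γ(m/2+s) Γ(m/2+s+k) / (s! (s+k)! Γ(m/2))`. -/
theorem gamma_alternating_sum (s k : ℕ) (m : ℝ) (hm : 2 < m) :
    ∑ j ∈ Finset.range (s + 1),
      (-1 : ℝ) ^ j * Real.Gamma (m / 2 + 2 * s + k - j) /
        ((Nat.factorial j : ℝ) * Real.Gamma ((s : ℝ) - j + 1) *
          Real.Gamma ((s : ℝ) + k - j + 1)) =
      Real.Gamma (m / 2 + s) * Real.Gamma (m / 2 + s + k) /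
        ((Nat.factorial s : ℝ) * (Nat.factorial (s + k) : ℝ) * Real.Gamma (m / 2)) := by
  set a := m / 2
  have ha : 0 < a := div_pos (by linarith) two_pos
  have not_neg_nat {y : ℝ} (hy : 0 < y) (i : ℕ) : y ≠ -i := by
    linarith [i.cast_nonneg (α := ℝ)]
  have hterm : ∀ j ∈ range (s + 1),
      (-1 : ℝ) ^ j * Real.Gamma (a + 2 * s + k - j) /
        ((j ! : ℝ) * Real.Gamma ((s : ℝ) - j + 1) * Real.Gamma ((s : ℝ) + k - j + 1)) =
      Real.Gamma (a + (s + k : ℕ)) *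
        ((-1) ^ j * (ascPochhammer ℝ (s - j)).eval (a + (s + k : ℕ)) /
          ((j ! : ℝ) * (s - j)! * (s + k - j)!)) := by
    intro j hj
    have hjs : j ≤ s := Nat.lt_succ_iff.mp (mem_range.mp hj)
    have hshift : a + 2 * s + k - j = a + (s + k : ℕ) + (s - j : ℕ) := by
      push_cast [Nat.cast_sub hjs]; ring
    rw [hshift, Real.Gamma_add_nat (not_neg_nat (by positivity)),
      Real.Gamma_natCast_sub_add_one hjs, show (s : ℝ) + k = (s + k : ℕ) by push_cast; rfl,
      Real.Gamma_natCast_sub_add_one (hjs.trans (Nat.le_add_right s k))]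
    ring
  have hΓ : Real.Gamma a ≠ 0 := (Real.Gamma_pos_of_pos ha).ne'
  rw [sum_congr rfl hterm, ← mul_sum, sum_neg_one_pow_mul_ascPochhammer_div_factorial _
    (Nat.le_add_right s k), add_sub_cancel_right, add_assoc a (s : ℝ), ← Nat.cast_add,
    Real.Gamma_add_nat (not_neg_nat ha) s]
  field_simp
end

section
/- Let τ = t + i·s with t, s orthonormal unit vectors in ℝ^m. For every natural number k, ∫_{S^{m-1}} ⟨ω,τ†⟩^k ⟨ω,τ⟩^k dS(ω) = (-1)^k · 2π^{m/2} · Γ(k+1)/Γ(k + m/2). -/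
/-!
Since `⟨ω, τ†⟩⟨ω, τ⟩ = -(⟨ω, t⟩² + ⟨ω, s⟩²)`, it suffices to integrate
`H ω = (⟨ω, t⟩² + ⟨ω, s⟩²) ^ k` over the sphere. As `H` is homogeneous of degree `2k`, polar
coordinates give `∫_{ℝ^m} H(x) e^{-‖x‖²} dx = (∫_{S^{m-1}} H dS) · Γ(k + m/2) / 2`.
On the other hand, after rotating `t, s` to the first two coordinate vectors and expanding
`(x₀² + x₁²) ^ k` binomially, the same Gaussian integral is a sum of products of the moments
`∫ x^{2a} e^{-x²} dx = Γ(a + 1/2)`, which the Beta-function identity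
`∑_{i+j=k} (k choose i) Γ(i + 1/2) Γ(j + 1/2) = π k!` sums to `π^{(m-2)/2} · π k!`.
-/

open MeasureTheory Set Finset Real Metric Module
open scoped Nat RealInnerProductSpace

theorem integral_Ioi_pow_mul_exp_neg_sq (n : ℕ) :
    ∫ r in Ioi (0 : ℝ), r ^ n * exp (-r ^ 2) = Gamma ((n + 1) / 2) / 2 := by
  have h := integral_rpow_mul_exp_neg_rpow (p := 2) (q := n) two_pos
    (neg_one_lt_zero.trans_le n.cast_nonneg)
  norm_cast at h
  rw [h]
  push_cast
  ring

theorem integral_pow_two_mul_mul_exp_neg_sq (a : ℕ) :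
    ∫ x : ℝ, x ^ (2 * a) * exp (-x ^ 2) = Gamma (a + 1 / 2) := by
  have h := integral_comp_abs (f := fun x : ℝ => x ^ (2 * a) * exp (-x ^ 2))
  simp only [sq_abs, (even_two_mul a).pow_abs] at h
  rw [h, integral_Ioi_pow_mul_exp_neg_sq]
  push_cast
  ring_nf

theorem integrable_pow_mul_exp_neg_sq (n : ℕ) :
    Integrable fun x : ℝ => x ^ n * exp (-x ^ 2) := by
  simpa using integrable_rpow_mul_exp_neg_mul_sq one_pos (neg_one_lt_zero.trans_le n.cast_nonneg)

theorem sum_antidiagonal_choose_mul_Gamma_add_half (k : ℕ) :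
    ∑ ij ∈ antidiagonal k, (k.choose ij.1 : ℝ) * (Gamma (ij.1 + 1 / 2) * Gamma (ij.2 + 1 / 2)) =
      π * k ! := by
  induction k with
  | zero => simp [-one_div, Gamma_one_half_eq, ← sq, sq_sqrt pi_pos.le]
  | succ k ih =>
    have hGamma (j : ℕ) : Gamma (↑(j + 1) + 1 / 2) = (j + 1 / 2) * Gamma (j + 1 / 2) := by
      rw [Nat.cast_succ, add_right_comm, Gamma_add_one (by positivity)]
    -- Pascal's rule splits the sum in two; `Γ(x + 1) = x Γ(x)` turns the summands of the halves
    -- into `(j + 1/2)` and `(i + 1/2)` times the old ones, which add up to `(k + 1)` times them.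
    rw [sum_antidiagonal_choose_succ_mul
      (fun i j => Gamma (i + 1 / 2) * Gamma (j + 1 / 2)), ← sum_add_distrib, Nat.factorial_succ,
      Nat.cast_mul, ← mul_left_comm, ← ih, mul_sum]
    refine sum_congr rfl fun ij hij => ?_
    rw [HasAntidiagonal.mem_antidiagonal] at hij
    rw [Nat.choose_symm_of_eq_add hij.symm, hGamma, hGamma, ← hij]
    push_cast
    ring

section GaussianMoments

variable {ι : Type*} [Fintype ι] (a : ι → ℕ)

theorem integrable_prod_pow_mul_exp_neg_sq :
    Integrable fun y : ι → ℝ => ∏ l, y l ^ (2 * a l) * exp (-y l ^ 2) :=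
  Integrable.fintype_prod (f := fun l x => x ^ (2 * a l) * exp (-x ^ 2)) fun _ =>
    integrable_pow_mul_exp_neg_sq _

theorem integral_prod_pow_mul_exp_neg_sq :
    ∫ y : ι → ℝ, ∏ l, y l ^ (2 * a l) * exp (-y l ^ 2) = ∏ l, Gamma (a l + 1 / 2) := by
  rw [integral_fintype_prod_volume_eq_prod (fun l x => x ^ (2 * a l) * exp (-x ^ 2))]
  exact prod_congr rfl fun l _ => integral_pow_two_mul_mul_exp_neg_sq (a l)

end GaussianMoments

theorem integral_sq_add_sq_pow_mul_exp_neg_sum_sq (n k : ℕ) :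
    ∫ y : Fin (n + 2) → ℝ, (y 0 ^ 2 + y 1 ^ 2) ^ k * exp (-∑ l, y l ^ 2) =
      √π ^ n * (π * k !) := by
  let a (ij : ℕ × ℕ) : Fin (n + 2) → ℕ := Matrix.vecCons ij.1 (Matrix.vecCons ij.2 0)
  have hexpand (y : Fin (n + 2) → ℝ) : (y 0 ^ 2 + y 1 ^ 2) ^ k * exp (-∑ l, y l ^ 2) =
      ∑ ij ∈ antidiagonal k, (k.choose ij.1 : ℝ) * ∏ l, y l ^ (2 * a ij l) * exp (-y l ^ 2) := by
    rw [(Commute.all (y 0 ^ 2) (y 1 ^ 2)).add_pow', sum_mul]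
    refine sum_congr rfl fun ij _ => ?_
    simp only [prod_mul_distrib, ← sum_neg_distrib, exp_sum, Fin.prod_univ_succ, a,
      Matrix.cons_val_zero, Matrix.cons_val_succ, Pi.zero_apply, pow_zero,
      prod_const_one, Fin.succ_zero_eq_one, nsmul_eq_mul, pow_mul]
    ring
  simp_rw [hexpand]
  rw [integral_finsetSum _ fun ij _ => (integrable_prod_pow_mul_exp_neg_sq (a ij)).const_mul _]
  simp only [integral_const_mul, integral_prod_pow_mul_exp_neg_sq]
  simp only [Fin.prod_univ_succ, a, Matrix.cons_val_zero, Matrix.cons_val_succ, Pi.zero_apply,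
    Nat.cast_zero, zero_add, Gamma_one_half_eq, prod_const, card_univ, Fintype.card_fin]
  rw [← sum_antidiagonal_choose_mul_Gamma_add_half, mul_sum]
  exact sum_congr rfl fun _ _ => by ring

section InnerProductSpace

variable {E : Type*} [NormedAddCommGroup E] [InnerProductSpace ℝ E] [FiniteDimensional ℝ E]

theorem exists_orthonormalBasis_extending_pair {n : ℕ} (hE : finrank ℝ E = n + 2) {u v : E}
    (hu : ‖u‖ = 1) (hv : ‖v‖ = 1) (huv : ⟪u, v⟫ = 0) :
    ∃ b : OrthonormalBasis (Fin (n + 2)) ℝ E, b 0 = u ∧ b 1 = v := by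
  let w : Fin (n + 2) → E := Matrix.vecCons u (Matrix.vecCons v 0)
  have hw : Orthonormal ℝ (({0, 1} : Set (Fin (n + 2))).domRestrict w) := by
    rw [orthonormal_iff_ite]
    rintro ⟨i, hi | hi⟩ ⟨j, hj | hj⟩ <;> subst hi hj <;>
      simp [w, Set.domRestrict, Subtype.ext_iff, hu, hv, huv, real_inner_comm u]
  obtain ⟨b, hb⟩ := hw.exists_orthonormalBasis_extension_of_card_eq (by simpa using hE)
  exact ⟨b, hb 0 (by simp), hb 1 (by simp)⟩

theorem integral_inner_sq_add_inner_sq_pow_mul_exp_neg_norm_sq [MeasurableSpace E]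
    [BorelSpace E] {n : ℕ} (hE : finrank ℝ E = n + 2) {u v : E} (hu : ‖u‖ = 1) (hv : ‖v‖ = 1)
    (huv : ⟪u, v⟫ = 0) (k : ℕ) :
    ∫ x, (⟪u, x⟫ ^ 2 + ⟪v, x⟫ ^ 2) ^ k * exp (-‖x‖ ^ 2) = √π ^ n * (π * k !) := by
  obtain ⟨b, rfl, rfl⟩ := exists_orthonormalBasis_extending_pair hE hu hv huv
  have hrepr (x : E) : (⟪b 0, x⟫ ^ 2 + ⟪b 1, x⟫ ^ 2) ^ k * exp (-‖x‖ ^ 2) =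
      (b.repr x 0 ^ 2 + b.repr x 1 ^ 2) ^ k * exp (-∑ l, b.repr x l ^ 2) := by
    rw [b.repr_apply_apply, b.repr_apply_apply, ← EuclideanSpace.real_norm_sq_eq,
      LinearIsometryEquiv.norm_map]
  simp_rw [hrepr]
  rw [b.measurePreserving_repr.integral_comp b.repr.toHomeomorph.measurableEmbedding
      fun y : EuclideanSpace ℝ (Fin (n + 2)) => (y 0 ^ 2 + y 1 ^ 2) ^ k * exp (-∑ l, y l ^ 2),
    ← (PiLp.volume_preserving_toLp (Fin (n + 2))).integral_comp
      (MeasurableEquiv.toLp 2 _).measurableEmbedding]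
  exact integral_sq_add_sq_pow_mul_exp_neg_sum_sq n k

end InnerProductSpace

theorem integral_volumeIoiPow (n : ℕ) (f : ℝ → ℝ) :
    ∫ r, f r ∂(Measure.volumeIoiPow n) = ∫ r in Ioi (0 : ℝ), r ^ n * f r := by
  rw [Measure.volumeIoiPow, integral_withDensity_eq_integral_toReal_smul
    (measurable_subtype_coe.pow_const n).ennreal_ofReal (.of_forall fun _ => ENNReal.ofReal_lt_top),
    integral_subtype_comap measurableSet_Ioi fun r => (ENNReal.ofReal (r ^ n)).toReal • f r]
  refine setIntegral_congr_fun measurableSet_Ioi fun r hr => ?_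
  rw [ENNReal.toReal_ofReal (pow_nonneg (le_of_lt hr) n), smul_eq_mul]

theorem integral_mul_exp_neg_norm_sq_of_homogeneous {E : Type*} [NormedAddCommGroup E]
    [NormedSpace ℝ E] [MeasurableSpace E] [BorelSpace E] [FiniteDimensional ℝ E] [Nontrivial E]
    (μ : Measure E) [μ.IsAddHaarMeasure] {d : ℕ} {H : E → ℝ}
    (hH : ∀ c : ℝ, 0 < c → ∀ x, H (c • x) = c ^ d * H x) :
    ∫ x, H x * exp (-‖x‖ ^ 2) ∂μ =
      (∫ ω : sphere (0 : E) 1, H ω ∂μ.toSphere) * (Gamma ((d + finrank ℝ E) / 2) / 2) := by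
  calc ∫ x, H x * exp (-‖x‖ ^ 2) ∂μ
      = ∫ x : ({0}ᶜ : Set E), H x * exp (-‖(x : E)‖ ^ 2) ∂μ.comap (↑) := by
        rw [integral_subtype_comap (measurableSet_singleton 0).compl
          fun x => H x * exp (-‖x‖ ^ 2), restrict_compl_singleton]
    _ = ∫ p : sphere (0 : E) 1 × Ioi (0 : ℝ), H p.1 * ((p.2 : ℝ) ^ d * exp (-(p.2 : ℝ) ^ 2))
          ∂μ.toSphere.prod (.volumeIoiPow (finrank ℝ E - 1)) := by
        rw [← μ.measurePreserving_homeomorphUnitSphereProd.integral_comp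
          (Homeomorph.measurableEmbedding _)]
        refine integral_congr_ae (.of_forall fun x => ?_)
        have hx : ‖(x : E)‖ ≠ 0 := norm_ne_zero_iff.mpr x.2
        simp only [homeomorphUnitSphereProd_apply_fst_coe, homeomorphUnitSphereProd_apply_snd_coe]
        rw [hH _ (inv_pos.mpr (norm_pos_iff.mpr x.2)), inv_pow]
        field_simp
    _ = (∫ ω : sphere (0 : E) 1, H ω ∂μ.toSphere) *
          ∫ r in Ioi (0 : ℝ), r ^ (finrank ℝ E - 1) * (r ^ d * exp (-r ^ 2)) := by
        rw [integral_prod_mul (fun ω : sphere (0 : E) 1 => H ω)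
          fun r : Ioi (0 : ℝ) => (r : ℝ) ^ d * exp (-(r : ℝ) ^ 2),
          integral_volumeIoiPow _ fun r => r ^ d * exp (-r ^ 2)]
    _ = _ := by
        have hpos : 0 < finrank ℝ E := finrank_pos
        have hdim : finrank ℝ E - 1 + d = d + finrank ℝ E - 1 := by omega
        simp_rw [← mul_assoc, ← pow_add, hdim, integral_Ioi_pow_mul_exp_neg_sq]
        push_cast [Nat.cast_sub (by omega : 1 ≤ d + finrank ℝ E)]
        ring_nf

theorem neg_add_I_mul_pow_mul_add_I_mul_pow (a b : ℝ) (k : ℕ) :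
    (-(a : ℂ) + Complex.I * b) ^ k * ((a : ℂ) + Complex.I * b) ^ k =
      (-1) ^ k * ((a ^ 2 + b ^ 2) ^ k : ℝ) := by
  push_cast
  rw [← mul_pow, ← mul_pow]
  congr 1
  linear_combination (b : ℂ) ^ 2 * Complex.I_sq

theorem sum_ofReal_mul_add_I_mul_eq_inner {ι : Type*} [Fintype ι] (x : EuclideanSpace ℝ ι)
    (a b : ι → ℝ) :
    ∑ j, (x j : ℂ) * (a j + Complex.I * b j) =
      (⟪WithLp.toLp 2 a, x⟫ : ℂ) + Complex.I * (⟪WithLp.toLp 2 b, x⟫ : ℂ) := by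
  simp only [PiLp.inner_apply, conj_trivial, RCLike.inner_apply, Complex.ofReal_sum,
    Complex.ofReal_mul, mul_sum, ← sum_add_distrib]
  exact sum_congr rfl fun _ _ => by ring

theorem pairing_dual_pow_mul_pairing_pow {ι : Type*} [Fintype ι] (x : EuclideanSpace ℝ ι)
    (t s : ι → ℝ) (k : ℕ) :
    (∑ j, (x j : ℂ) * (-(t j : ℂ) + Complex.I * s j)) ^ k *
        (∑ j, (x j : ℂ) * ((t j : ℂ) + Complex.I * s j)) ^ k =
      (-1) ^ k * ((⟪WithLp.toLp 2 t, x⟫ ^ 2 + ⟪WithLp.toLp 2 s, x⟫ ^ 2) ^ k : ℝ) := by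
  have hdual := sum_ofReal_mul_add_I_mul_eq_inner x (-t) s
  simp only [Pi.neg_apply, Complex.ofReal_neg, WithLp.toLp_neg, inner_neg_left] at hdual
  rw [hdual, sum_ofReal_mul_add_I_mul_eq_inner, neg_add_I_mul_pow_mul_add_I_mul_pow]

theorem rpow_natCast_add_two_div_two {x : ℝ} (hx : 0 < x) (n : ℕ) :
    x ^ (((n + 2 : ℕ) : ℝ) / 2) = x * √x ^ n := by
  rw [show ((n + 2 : ℕ) : ℝ) / 2 = 1 + 1 / 2 * n by push_cast; ring, rpow_add hx, rpow_one,
    rpow_mul hx.le, rpow_natCast, sqrt_eq_rpow]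

/-- Let `τ = t + is` with `t, s` orthonormal unit vectors of `ℝ^m` (`m ≥ 2`), `τ† = -t + is`.
For every natural number `k`,
`∫_{S^{m-1}} ⟨ω,τ†⟩^k ⟨ω,τ⟩^k dS(ω) = (-1)^k · 2π^{m/2} · Γ(k+1)/Γ(k+m/2)`,
the integral being with respect to the surface measure on the unit sphere. -/
theorem sphere_integral_pairing_eq (m : ℕ) (hm : 2 ≤ m) (t s : Fin m → ℝ)
    (ht : ∑ j, t j ^ 2 = 1) (hs : ∑ j, s j ^ 2 = 1) (hts : ∑ j, t j * s j = 0) (k : ℕ) :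
    ∫ ω : Metric.sphere (0 : EuclideanSpace ℝ (Fin m)) 1,
        (∑ j, ((ω : EuclideanSpace ℝ (Fin m)) j : ℂ) * (-(t j : ℂ) + Complex.I * s j)) ^ k *
        (∑ j, ((ω : EuclideanSpace ℝ (Fin m)) j : ℂ) * ((t j : ℂ) + Complex.I * s j)) ^ k
        ∂((volume : Measure (EuclideanSpace ℝ (Fin m))).toSphere) =
      (-1 : ℂ) ^ k * ((2 * Real.pi ^ ((m : ℝ) / 2) *
        Real.Gamma (k + 1) / Real.Gamma (k + (m : ℝ) / 2) : ℝ) : ℂ) := by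
  obtain ⟨n, rfl⟩ : ∃ n, m = n + 2 := ⟨m - 2, by omega⟩
  set T : EuclideanSpace ℝ (Fin (n + 2)) := WithLp.toLp 2 t
  set S : EuclideanSpace ℝ (Fin (n + 2)) := WithLp.toLp 2 s
  let H (x : EuclideanSpace ℝ (Fin (n + 2))) : ℝ := (⟪T, x⟫ ^ 2 + ⟪S, x⟫ ^ 2) ^ k
  have hH (c : ℝ) (_ : 0 < c) (x) : H (c • x) = c ^ (2 * k) * H x := by
    simp only [H, inner_smul_right, pow_mul, ← mul_pow]
    ring
  have hT : ‖T‖ = 1 := by simp [T, EuclideanSpace.norm_eq, ht]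
  have hS : ‖S‖ = 1 := by simp [S, EuclideanSpace.norm_eq, hs]
  have hTS : ⟪T, S⟫ = 0 := by simpa [T, S, PiLp.inner_apply, mul_comm] using hts
  have hpolar := integral_mul_exp_neg_norm_sq_of_homogeneous volume hH
  rw [integral_inner_sq_add_inner_sq_pow_mul_exp_neg_norm_sq finrank_euclideanSpace_fin hT hS hTS,
    finrank_euclideanSpace_fin, show ((2 * k : ℕ) + ((n + 2 : ℕ) : ℝ)) / 2 = k + ((n + 2 : ℕ) : ℝ) / 2
      by push_cast; ring] at hpolar
  simp_rw [pairing_dual_pow_mul_pairing_pow]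
  rw [integral_const_mul, integral_complex_ofReal, Gamma_nat_eq_factorial,
    rpow_natCast_add_two_div_two pi_pos]
  congr 2
  rw [eq_div_iff (Gamma_pos_of_pos (by positivity)).ne']
  linear_combination -2 * hpolar
end

section
/- Almansi–Fischer decomposition: every harmonic homogeneous polynomial H_k of degree k on ℝ^m (m ≥ 3, taking values in the Clifford algebra) decomposes uniquely as H_k(x) = M_k(x) + x·M_{k-1}(x), where M_k and M_{k-1} are monogenic homogeneous polynomials of degrees k and k-1 (i.e., in the kernel of the Dirac operator ∂_x = ∑ⱼ eⱼ∂_{xⱼ}), and explicitly M_k(x) = (1 + (1/(2k+m-2)) x ∂_x) H_k(x) and M_{k-1}(x) = -(1/(2k+m-2)) ∂_x H_k(x). -/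
open scoped TensorProduct

/-- The complex Clifford algebra `ℂ_m`: Clifford algebra of `v ↦ -∑ vⱼ²` on `ℂ^m`. -/
noncomputable def Qf (m : ℕ) : QuadraticForm ℂ (Fin m → ℂ) :=
  QuadraticMap.weightedSumSquares ℂ (fun _ : Fin m => (-1 : ℂ))

/-- Clifford-algebra-valued polynomials in `m` variables, realized as the tensor product
of the polynomial ring with the Clifford algebra. -/
abbrev PolyCl (m : ℕ) : Type := MvPolynomial (Fin m) ℂ ⊗[ℂ] CliffordAlgebra (Qf m)

/-- Partial derivative `∂/∂zⱼ` on Clifford-valued polynomials. -/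
noncomputable def pd (m : ℕ) (j : Fin m) : PolyCl m →ₗ[ℂ] PolyCl m :=
  LinearMap.rTensor (CliffordAlgebra (Qf m)) (MvPolynomial.pderiv j).toLinearMap

/-- The (complexified) Dirac operator `∂_z = ∑ⱼ eⱼ ∂_{zⱼ}` on Clifford-valued polynomials. -/
noncomputable def dirac (m : ℕ) (F : PolyCl m) : PolyCl m :=
  ∑ j, ((1 : MvPolynomial (Fin m) ℂ) ⊗ₜ[ℂ] CliffordAlgebra.ι (Qf m) (Pi.single j 1)) *
    pd m j F

/-- The vector variable `z = ∑ⱼ zⱼ eⱼ` as a Clifford-valued polynomial. -/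
noncomputable def zvec (m : ℕ) : PolyCl m :=
  ∑ j, (MvPolynomial.X j) ⊗ₜ[ℂ] CliffordAlgebra.ι (Qf m) (Pi.single j 1)

/-- A Clifford-valued polynomial is homogeneous of degree `k` if it is a sum of tensors
`p ⊗ c` with `p` homogeneous of degree `k`. -/
def homog (m : ℕ) (k : ℕ) (F : PolyCl m) : Prop :=
  F ∈ Submodule.span ℂ
    {x : PolyCl m | ∃ p c, MvPolynomial.IsHomogeneous p k ∧ x = p ⊗ₜ[ℂ] c}

/-- The Laplacian `Δ = -∂_z²` on Clifford-valued polynomials. -/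
noncomputable def lapCl (m : ℕ) (F : PolyCl m) : PolyCl m :=
  ∑ j, pd m j (pd m j F)

/-!
The Clifford relations `eᵢeⱼ + eⱼeᵢ = -2δᵢⱼ` give `∂² = -Δ` and the anticommutation rule
`∂(z F) = -m F - 2 E F - z ∂F`, where `E = ∑ zⱼ ∂ⱼ` is the Euler operator. For `F` monogenic and
homogeneous of degree `d` this reads `∂(z F) = -(m + 2d) F`. Since `H` is harmonic, `∂H` is
monogenic, so `∂(z ∂H) = -(2k + m - 2) ∂H` and `H + c z ∂H` is monogenic. Uniqueness: if
`A + z B = 0` with `A, B` monogenic, applying `∂` gives `(m + 2d) B = 0`, hence `B = 0` and `A = 0`.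
-/

namespace MvPolynomial

variable {σ R : Type*} [CommSemiring R]

theorem pderiv_pderiv_comm (i j : σ) (p : MvPolynomial σ R) :
    pderiv i (pderiv j p) = pderiv j (pderiv i p) := by
  classical
  induction p using MvPolynomial.induction_on' with
  | add p q hp hq => simp only [map_add, hp, hq]
  | monomial s a =>
    obtain rfl | hij := eq_or_ne i j
    · rfl
    have h1 : (s - Finsupp.single j 1 : σ →₀ ℕ) i = s i := by simp [hij.symm]
    have h2 : (s - Finsupp.single i 1 : σ →₀ ℕ) j = s j := by simp [hij]
    rw [pderiv_monomial, pderiv_monomial, pderiv_monomial, pderiv_monomial, h1, h2,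
      tsub_right_comm, mul_right_comm _ (s i : R)]

theorem pderiv_eq_zero_of_isHomogeneous_zero {p : MvPolynomial σ R} (hp : p.IsHomogeneous 0)
    (i : σ) : pderiv i p = 0 := by
  rw [← totalDegree_zero_iff_isHomogeneous, totalDegree_eq_zero_iff_eq_C] at hp
  rw [hp, pderiv_C]

end MvPolynomial

theorem sum_sum_mul_of_anticomm {ι A : Type*} [Fintype ι] [DecidableEq ι] [Ring A]
    [IsAddTorsionFree A] (u : ι → A)
    (hu : ∀ i j, u i * u j + u j * u i = if i = j then -2 else 0)
    (D : ι → ι → A) (hD : ∀ i j, D i j = D j i) :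
    ∑ i, ∑ j, u i * u j * D i j = -∑ i, D i i := by
  refine nsmul_right_injective two_ne_zero ?_
  calc 2 • ∑ i, ∑ j, u i * u j * D i j
      = ∑ i, ∑ j, (u i * u j + u j * u i) * D i j := by
        rw [two_nsmul]
        conv_lhs => enter [2]; rw [Finset.sum_comm]
        simp only [← Finset.sum_add_distrib, add_mul, hD]
    _ = 2 • -∑ i, D i i := by
        simp [hu, ite_mul, Finset.sum_ite_eq, Finset.mul_sum]

open MvPolynomial CliffordAlgebra TensorProduct

section

variable {m k : ℕ}

theorem Qf_apply (v : Fin m → ℂ) : Qf m v = -∑ l, v l * v l := by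
  simp [Qf, QuadraticMap.weightedSumSquares_apply]

theorem polar_Qf (v w : Fin m → ℂ) : QuadraticMap.polar (Qf m) v w = -2 * ∑ l, v l * w l := by
  simp only [QuadraticMap.polar, Qf_apply, Pi.add_apply, Finset.mul_sum,
    ← Finset.sum_neg_distrib, ← Finset.sum_sub_distrib]
  exact Finset.sum_congr rfl fun _ _ => by ring

theorem polar_Qf_single (i j : Fin m) :
    QuadraticMap.polar (Qf m) (Pi.single i 1) (Pi.single j 1) = if i = j then -2 else 0 := by
  simp [polar_Qf, Pi.single_apply, eq_comm]

noncomputable def cliffGen (m : ℕ) (j : Fin m) : CliffordAlgebra (Qf m) :=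
  ι (Qf m) (Pi.single j 1)

theorem cliffGen_mul_self (j : Fin m) : cliffGen m j * cliffGen m j = -1 := by
  simp [cliffGen, ι_sq_scalar, Qf_apply, Pi.single_apply]

theorem cliffGen_mul_add_swap (i j : Fin m) :
    cliffGen m i * cliffGen m j + cliffGen m j * cliffGen m i
      = algebraMap ℂ _ (if i = j then -2 else 0) := by
  rw [cliffGen, cliffGen, ι_mul_ι_add_swap, polar_Qf_single]

theorem tmul_cliffGen_mul_add_swap (p q : MvPolynomial (Fin m) ℂ) (i j : Fin m) :
    (p ⊗ₜ[ℂ] cliffGen m i) * (q ⊗ₜ cliffGen m j) + (q ⊗ₜ cliffGen m j) * (p ⊗ₜ cliffGen m i)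
      = (if i = j then -2 else 0) * ((p * q) ⊗ₜ 1 : PolyCl m) := by
  have h : (p * q) ⊗ₜ[ℂ] algebraMap ℂ (CliffordAlgebra (Qf m)) (if i = j then -2 else 0)
      = algebraMap ℂ (PolyCl m) (if i = j then -2 else 0) * ((p * q) ⊗ₜ 1) := by
    rw [Algebra.TensorProduct.algebraMap_apply', Algebra.TensorProduct.tmul_mul_tmul, one_mul,
      mul_one]
  rw [Algebra.TensorProduct.tmul_mul_tmul, Algebra.TensorProduct.tmul_mul_tmul, mul_comm q,
    ← tmul_add, cliffGen_mul_add_swap, h, apply_ite (algebraMap ℂ (PolyCl m)), map_neg,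
    map_ofNat, map_zero]

theorem pd_tmul (j : Fin m) (p : MvPolynomial (Fin m) ℂ) (c : CliffordAlgebra (Qf m)) :
    pd m j (p ⊗ₜ c) = pderiv j p ⊗ₜ c := rfl

theorem pd_one_tmul (j : Fin m) (c : CliffordAlgebra (Qf m)) :
    pd m j ((1 : MvPolynomial (Fin m) ℂ) ⊗ₜ c) = 0 := by
  rw [pd_tmul, Derivation.map_one_eq_zero, zero_tmul]

theorem pd_mul (j : Fin m) (F G : PolyCl m) :
    pd m j (F * G) = pd m j F * G + F * pd m j G := by
  induction F using TensorProduct.induction_on with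
  | zero => simp
  | add F₁ F₂ h₁ h₂ => simp only [add_mul, map_add, h₁, h₂]; abel
  | tmul p c =>
    induction G using TensorProduct.induction_on with
    | zero => simp
    | add G₁ G₂ h₁ h₂ => simp only [mul_add, map_add, h₁, h₂]; abel
    | tmul q d =>
      simp only [Algebra.TensorProduct.tmul_mul_tmul, pd_tmul, Derivation.leibniz, smul_eq_mul,
        add_tmul, add_comm, mul_comm q]

theorem pd_pd_comm (i j : Fin m) (F : PolyCl m) : pd m i (pd m j F) = pd m j (pd m i F) := by
  induction F using TensorProduct.induction_on with
  | zero => simp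
  | add F G hF hG => simp only [map_add, hF, hG]
  | tmul p c => rw [pd_tmul, pd_tmul, pd_tmul, pd_tmul, pderiv_pderiv_comm]

noncomputable def basisVec (m : ℕ) (j : Fin m) : PolyCl m := 1 ⊗ₜ cliffGen m j

theorem zvec_eq : zvec m = ∑ j, X j ⊗ₜ cliffGen m j := rfl

theorem pd_zvec (j : Fin m) : pd m j (zvec m) = basisVec m j := by
  classical
  simp [zvec, basisVec, cliffGen, pd_tmul, pderiv_X, Pi.single_apply, ite_tmul]

theorem dirac_eq (F : PolyCl m) : dirac m F = ∑ j, basisVec m j * pd m j F := rfl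

theorem dirac_zero : dirac m 0 = 0 := by
  simp only [dirac, map_zero, mul_zero, Finset.sum_const_zero]

theorem dirac_add (F G : PolyCl m) : dirac m (F + G) = dirac m F + dirac m G := by
  simp only [dirac, map_add, mul_add, Finset.sum_add_distrib]

theorem dirac_sub (F G : PolyCl m) : dirac m (F - G) = dirac m F - dirac m G := by
  simp only [dirac, map_sub, mul_sub, Finset.sum_sub_distrib]

theorem dirac_smul (a : ℂ) (F : PolyCl m) : dirac m (a • F) = a • dirac m F := by
  simp only [dirac, map_smul, mul_smul_comm, Finset.smul_sum]

instance : IsAddTorsionFree (PolyCl m) := IsAddTorsionFree.of_isTorsionFree ℂ _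

theorem dirac_dirac (F : PolyCl m) : dirac m (dirac m F) = -lapCl m F := by
  have expand : dirac m (dirac m F) = ∑ i, ∑ j,
      basisVec m i * basisVec m j * pd m i (pd m j F) := by
    simp only [dirac_eq, basisVec, map_sum, pd_mul, pd_one_tmul, zero_mul, zero_add,
      Finset.mul_sum, mul_assoc]
  rw [expand, lapCl]
  refine sum_sum_mul_of_anticomm _ (fun i j => ?_) _ fun i j => pd_pd_comm i j F
  rw [basisVec, basisVec, tmul_cliffGen_mul_add_swap, mul_one, ← Algebra.TensorProduct.one_def,
    mul_one]

noncomputable def euler (m : ℕ) : PolyCl m →ₗ[ℂ] PolyCl m :=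
  ∑ j, LinearMap.mulLeft ℂ (X j ⊗ₜ[ℂ] 1) ∘ₗ pd m j

theorem euler_apply (F : PolyCl m) : euler m F = ∑ j, (X j ⊗ₜ[ℂ] 1 : PolyCl m) * pd m j F := by
  simp [euler]

theorem basisVec_mul_zvec_add_swap (j : Fin m) :
    basisVec m j * zvec m + zvec m * basisVec m j = -2 * (X j ⊗ₜ[ℂ] 1 : PolyCl m) := by
  simp only [zvec_eq, basisVec, Finset.mul_sum, Finset.sum_mul, ← Finset.sum_add_distrib,
    tmul_cliffGen_mul_add_swap, one_mul, ite_mul, zero_mul, Finset.sum_ite_eq, Finset.mem_univ,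
    if_true]

theorem dirac_zvec_mul (F : PolyCl m) :
    dirac m (zvec m * F) = -(m • F) - 2 • euler m F - zvec m * dirac m F := by
  -- `neg_one_mul` and `neg_mul` are applied as terms: `rw` cannot match them, since the product
  -- on `PolyCl m` is not reducibly the one coming from its `Ring` instance.
  have hsq (j : Fin m) (G : PolyCl m) : basisVec m j * (basisVec m j * G) = -G := by
    have h : basisVec m j * basisVec m j = -1 := by
      rw [basisVec, Algebra.TensorProduct.tmul_mul_tmul, cliffGen_mul_self, one_mul, tmul_neg,
        ← Algebra.TensorProduct.one_def]
    rw [← mul_assoc, h]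
    exact neg_one_mul G
  have hswap (j : Fin m) (G : PolyCl m) : basisVec m j * (zvec m * G)
      = -(2 • ((X j ⊗ₜ[ℂ] 1 : PolyCl m) * G)) - zvec m * (basisVec m j * G) := by
    rw [← mul_assoc, eq_sub_of_add_eq (basisVec_mul_zvec_add_swap j), sub_mul, mul_assoc,
      mul_assoc]
    exact congrArg (· - _) ((neg_mul (2 : PolyCl m) _).trans (by rw [two_mul, two_nsmul]))
  simp only [dirac_eq, pd_mul, pd_zvec, mul_add, hsq, hswap, euler_apply, Finset.sum_add_distrib,
    Finset.sum_sub_distrib, Finset.sum_neg_distrib, Finset.smul_sum, Finset.mul_sum,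
    Finset.sum_const, Finset.card_univ, Fintype.card_fin]
  abel

theorem homog_tmul {p : MvPolynomial (Fin m) ℂ} (hp : p.IsHomogeneous k)
    (c : CliffordAlgebra (Qf m)) : homog m k (p ⊗ₜ c) :=
  Submodule.subset_span ⟨p, c, hp, rfl⟩

theorem homog_zero : homog m k 0 := Submodule.zero_mem _

theorem homog_add {F G : PolyCl m} (hF : homog m k F) (hG : homog m k G) : homog m k (F + G) :=
  Submodule.add_mem _ hF hG

theorem homog_sub {F G : PolyCl m} (hF : homog m k F) (hG : homog m k G) : homog m k (F - G) :=
  Submodule.sub_mem _ hF hG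

theorem homog_smul (a : ℂ) {F : PolyCl m} (hF : homog m k F) : homog m k (a • F) :=
  Submodule.smul_mem _ a hF

theorem homog_map_of_tmul {l : ℕ} (T : PolyCl m →ₗ[ℂ] PolyCl m)
    (hT : ∀ p c, p.IsHomogeneous k → homog m l (T (p ⊗ₜ c))) {F : PolyCl m}
    (hF : homog m k F) : homog m l (T F) :=
  (Submodule.span_le (p := (Submodule.span ℂ _).comap T)).mpr
    (by rintro _ ⟨p, c, hp, rfl⟩; exact hT p c hp) hF

theorem eq_of_homog_of_tmul {T S : PolyCl m →ₗ[ℂ] PolyCl m}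
    (hTS : ∀ p c, p.IsHomogeneous k → T (p ⊗ₜ c) = S (p ⊗ₜ c)) {F : PolyCl m}
    (hF : homog m k F) : T F = S F :=
  LinearMap.eqOn_span (by rintro _ ⟨p, c, hp, rfl⟩; exact hTS p c hp) hF

theorem homog_pd {F : PolyCl m} (hF : homog m k F) (j : Fin m) :
    homog m (k - 1) (pd m j F) :=
  homog_map_of_tmul (pd m j) (fun _ c hp => homog_tmul hp.pderiv c) hF

theorem pd_eq_zero_of_homog_zero {F : PolyCl m} (hF : homog m 0 F) (j : Fin m) :
    pd m j F = 0 :=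
  eq_of_homog_of_tmul (S := 0) (fun p c hp => by
    rw [pd_tmul, pderiv_eq_zero_of_isHomogeneous_zero hp, zero_tmul, LinearMap.zero_apply]) hF

theorem homog_tmul_mul {d : ℕ} {q : MvPolynomial (Fin m) ℂ} (hq : q.IsHomogeneous d)
    (c : CliffordAlgebra (Qf m)) {F : PolyCl m} (hF : homog m k F) :
    homog m (d + k) ((q ⊗ₜ c) * F) :=
  homog_map_of_tmul (LinearMap.mulLeft ℂ (q ⊗ₜ c)) (fun p c' hp => by
    rw [LinearMap.mulLeft_apply, Algebra.TensorProduct.tmul_mul_tmul]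
    exact homog_tmul (hq.mul hp) _) hF

theorem homog_dirac {F : PolyCl m} (hF : homog m k F) : homog m (k - 1) (dirac m F) :=
  Submodule.sum_mem _ fun j _ => by
    have h := homog_tmul_mul (isHomogeneous_one _ _) (cliffGen m j) (homog_pd hF j)
    rwa [zero_add] at h

theorem homog_zvec_mul {F : PolyCl m} (hF : homog m k F) : homog m (k + 1) (zvec m * F) := by
  rw [zvec_eq, Finset.sum_mul, add_comm]
  exact Submodule.sum_mem _ fun j _ => homog_tmul_mul (isHomogeneous_X ℂ j) _ hF

theorem dirac_eq_zero_of_homog_zero {F : PolyCl m} (hF : homog m 0 F) : dirac m F = 0 := by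
  simp only [dirac, pd_eq_zero_of_homog_zero hF, mul_zero, Finset.sum_const_zero]

theorem homog_zvec_mul_dirac {F : PolyCl m} (hF : homog m k F) :
    homog m k (zvec m * dirac m F) := by
  obtain rfl | hk := Nat.eq_zero_or_pos k
  · rw [dirac_eq_zero_of_homog_zero hF, mul_zero]
    exact homog_zero
  · simpa [Nat.sub_add_cancel hk] using homog_zvec_mul (homog_dirac hF)

theorem euler_of_homog {F : PolyCl m} (hF : homog m k F) : euler m F = k • F :=
  eq_of_homog_of_tmul (S := k • LinearMap.id) (fun p c hp => by
    simp only [euler_apply, pd_tmul, Algebra.TensorProduct.tmul_mul_tmul, one_mul, ← sum_tmul,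
      hp.sum_X_mul_pderiv, LinearMap.smul_apply, LinearMap.id_apply, smul_tmul']) hF

theorem dirac_zvec_mul_of_monogenic {d : ℕ} {F : PolyCl m} (hF : homog m d F)
    (hmono : dirac m F = 0) : dirac m (zvec m * F) = -((m + 2 * d) • F) := by
  rw [dirac_zvec_mul, euler_of_homog hF, hmono, mul_zero, sub_zero, smul_smul, add_smul]
  abel

theorem eq_zero_of_add_zvec_mul_eq_zero (hm : m ≠ 0) {d : ℕ} {A B : PolyCl m}
    (hA : dirac m A = 0) (hB : dirac m B = 0) (hBd : homog m d B) (h : A + zvec m * B = 0) :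
    A = 0 ∧ B = 0 := by
  have hsmul : (m + 2 * d) • B = 0 := by
    have := congrArg (dirac m) h
    rwa [dirac_add, hA, zero_add, dirac_zvec_mul_of_monogenic hBd hB, dirac_zero,
      neg_eq_zero] at this
  have hB0 : B = 0 := (smul_eq_zero.mp hsmul).resolve_left (by omega)
  rw [hB0, mul_zero, add_zero] at h
  exact ⟨h, hB0⟩

theorem dirac_zvec_mul_dirac_of_harmonic {H : PolyCl m} (hH : homog m k H)
    (hharm : lapCl m H = 0) :
    dirac m (zvec m * dirac m H) = -(2 * k + m - 2 : ℂ) • dirac m H := by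
  obtain rfl | hk := Nat.eq_zero_or_pos k
  · rw [dirac_eq_zero_of_homog_zero hH, mul_zero, dirac_zero, smul_zero]
  rw [dirac_zvec_mul_of_monogenic (homog_dirac hH) (by rw [dirac_dirac, hharm, neg_zero]),
    ← Nat.cast_smul_eq_nsmul ℂ]
  push_cast [Nat.cast_sub hk]
  module

end

/-- Almansi–Fischer decomposition: every harmonic homogeneous Clifford-valued polynomial
`H` of degree `k` on `ℝ^m` (`m ≥ 3`) decomposes uniquely as `H = M_k + z·M_{k-1}` with
`M_k, M_{k-1}` monogenic homogeneous of degrees `k, k-1`, and explicitly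
`M_k = (1 + (1/(2k+m-2)) z ∂_z) H` and `M_{k-1} = -(1/(2k+m-2)) ∂_z H`. -/
theorem almansi_fischer (m k : ℕ) (hm : 3 ≤ m) (H : PolyCl m)
    (hH : homog m k H) (hharm : lapCl m H = 0) :
    let c : ℂ := 1 / (2 * k + m - 2)
    let Mk : PolyCl m := H + c • (zvec m * dirac m H)
    let Mk1 : PolyCl m := (-c) • dirac m H
    H = Mk + zvec m * Mk1 ∧
    dirac m Mk = 0 ∧ dirac m Mk1 = 0 ∧
    homog m k Mk ∧ homog m (k - 1) Mk1 ∧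
    (∀ A B : PolyCl m, dirac m A = 0 → dirac m B = 0 →
      homog m k A → homog m (k - 1) B → H = A + zvec m * B → A = Mk ∧ B = Mk1) := by
  intro c Mk Mk1
  have hδ : (2 * k + m - 2 : ℂ) ≠ 0 :=
    sub_ne_zero.mpr (by exact_mod_cast (by omega : 2 * k + m ≠ 2))
  have hdecomp : H = Mk + zvec m * Mk1 := by
    simp only [Mk, Mk1, mul_smul_comm]
    module
  have hMk : dirac m Mk = 0 := by
    simp only [Mk, c, dirac_add, dirac_smul, dirac_zvec_mul_dirac_of_harmonic hH hharm, smul_smul]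
    field_simp
    module
  have hMk1 : dirac m Mk1 = 0 := by
    rw [dirac_smul, dirac_dirac, hharm, neg_zero, smul_zero]
  have hMkh : homog m k Mk := homog_add hH (homog_smul c (homog_zvec_mul_dirac hH))
  have hMk1h : homog m (k - 1) Mk1 := homog_smul _ (homog_dirac hH)
  refine ⟨hdecomp, hMk, hMk1, hMkh, hMk1h, fun A B hA hB _ hBh hAB => ?_⟩
  have hdiff : (A - Mk) + zvec m * (B - Mk1) = 0 :=
    calc (A - Mk) + zvec m * (B - Mk1) = (A + zvec m * B) - (Mk + zvec m * Mk1) := by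
          rw [mul_sub]; abel
      _ = 0 := by rw [← hAB, ← hdecomp, sub_self]
  obtain ⟨hA', hB'⟩ := eq_zero_of_add_zvec_mul_eq_zero (by omega)
    (by rw [dirac_sub, hA, hMk, sub_zero]) (by rw [dirac_sub, hB, hMk1, sub_zero])
    (homog_sub hBh hMk1h) hdiff
  exact ⟨sub_eq_zero.mp hA', sub_eq_zero.mp hB'⟩
end
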